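/- High-frequency contraction of the classical Schwarz method (Theorem 2.2, last case): for every fixed Fourier frequency k with k > ω/Cs (so that λ₁ = √(k² − ω²/Cs²) > 0 and λ₂ = √(k² − ω²/Cp²) > 0 are real, and k² − λ₁λ₂ > 0), there exists δ₀ > 0 such that for all overlaps δ with 0 < δ < δ₀, both roots of the quadratic Q(z) = z² − (X² + 2Y)z + Y² are real and lie in the open interval (0, 1); hence ρ_cla(k) < 1. -/

import Mathlib

noncomputable section

open Complex

/-- `λ₁ = √(k² − ω²/Cs²)`, principal branch of the complex square root. -/
def lam1 (ω Cs k : ℝ) : ℂ := ((k ^ 2 - ω ^ 2 / Cs ^ 2 : ℝ) : ℂ) ^ ((1 : ℂ) / 2)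

/-- `λ₂ = √(k² − ω²/Cp²)`, principal branch of the complex square root. -/
def lam2 (ω Cp k : ℝ) : ℂ := ((k ^ 2 - ω ^ 2 / Cp ^ 2 : ℝ) : ℂ) ^ ((1 : ℂ) / 2)

/-- `X = ((k² + λ₁λ₂)/(k² − λ₁λ₂))(e^{−λ₁δ} − e^{−λ₂δ})` of the classical Schwarz method. -/
def Xcla (ω Cs Cp k δ : ℝ) : ℂ :=
  (((k : ℂ) ^ 2 + lam1 ω Cs k * lam2 ω Cp k) / ((k : ℂ) ^ 2 - lam1 ω Cs k * lam2 ω Cp k)) *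
    (Complex.exp (-(lam1 ω Cs k) * (δ : ℂ)) - Complex.exp (-(lam2 ω Cp k) * (δ : ℂ)))

/-- `Y = e^{−δ(λ₁+λ₂)}` of the classical Schwarz method. -/
def Ycla (ω Cs Cp k δ : ℝ) : ℂ :=
  Complex.exp (-(δ : ℂ) * (lam1 ω Cs k + lam2 ω Cp k))

/-- The quadratic `Q(z) = z² − (X² + 2Y)z + Y²` whose roots are the eigenvalues `r±`
of the double-iteration operator of the classical overlapping Schwarz method. -/
def Qcla (ω Cs Cp k δ : ℝ) (z : ℂ) : ℂ :=
  z ^ 2 - ((Xcla ω Cs Cp k δ) ^ 2 + 2 * Ycla ω Cs Cp k δ) * z + (Ycla ω Cs Cp k δ) ^ 2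

/-!
For `k > ω/Cs` both `λ₁ = a` and `λ₂ = b` are real with `0 < a < b < k`, so `X` and `Y` are real
and positive for `δ > 0`. Writing `s = √(X² + 4Y)`, the roots of `Q` are `((s ± X)/2)²`, which lie
in `(0, 1)` exactly when `X + Y < 1`. At `δ = 0` we have `X + Y = 1`, and the `δ`-derivative there
is `C(b - a) - (a + b)` with `C = (k² + ab)/(k² - ab)`, which is negative because `b < k`;
so `X + Y < 1` for all small overlaps.
-/

open Filter Topology

theorem ofReal_cpow_one_half {x : ℝ} (hx : 0 ≤ x) : (x : ℂ) ^ ((1 : ℂ) / 2) = (√x : ℂ) := by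
  rw [Real.sqrt_eq_rpow, Complex.ofReal_cpow hx]
  norm_num

theorem quadratic_roots_mem_Ioo {X Y : ℝ} (hY : 0 < Y) (hXY : |X| + Y < 1) {z : ℂ}
    (hz : z ^ 2 - ((X : ℂ) ^ 2 + 2 * Y) * z + (Y : ℂ) ^ 2 = 0) :
    ∃ x : ℝ, z = x ∧ 0 < x ∧ x < 1 := by
  set s := √(X ^ 2 + 4 * Y)
  set t := |X|
  have hs : s ^ 2 = X ^ 2 + 4 * Y := Real.sq_sqrt (by positivity)
  have ht : t ^ 2 = X ^ 2 := sq_abs X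
  have ht0 : 0 ≤ t := abs_nonneg X
  have hts : t < s := lt_of_pow_lt_pow_left₀ 2 (Real.sqrt_nonneg _) (by linarith)
  have hst : s < 2 - t := lt_of_pow_lt_pow_left₀ 2 (by linarith) (by nlinarith)
  have hfactor : z ^ 2 - ((X : ℂ) ^ 2 + 2 * Y) * z + (Y : ℂ) ^ 2
      = (z - (((s + t) / 2) ^ 2 : ℝ)) * (z - (((s - t) / 2) ^ 2 : ℝ)) := by
    have hs' : (s : ℂ) ^ 2 = X ^ 2 + 4 * Y := by exact_mod_cast hs
    have ht' : (t : ℂ) ^ 2 = X ^ 2 := by exact_mod_cast ht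
    push_cast
    linear_combination (z / 2 - (s ^ 2 - t ^ 2 + 4 * Y) / 16) * hs'
      + (z / 2 + (s ^ 2 - t ^ 2 + 4 * Y) / 16) * ht'
  rw [hfactor, mul_eq_zero, sub_eq_zero, sub_eq_zero] at hz
  rcases hz with hz | hz
  · exact ⟨_, hz, by positivity, pow_lt_one₀ (by positivity) (by linarith) two_ne_zero⟩
  · exact ⟨_, hz, pow_pos (by linarith) 2, pow_lt_one₀ (by linarith) (by linarith) two_ne_zero⟩

theorem eventually_nhdsGT_lt_of_hasDerivAt_neg {f : ℝ → ℝ} {f' x : ℝ} (hf : HasDerivAt f f' x)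
    (hf' : f' < 0) : ∀ᶠ y in 𝓝[>] x, f y < f x := by
  have hslope := (hasDerivAt_iff_tendsto_slope.mp hf).mono_left (nhdsGT_le_nhdsNE x)
  filter_upwards [hslope.eventually (eventually_lt_nhds hf'), self_mem_nhdsWithin]
    with y hy (hxy : x < y)
  rw [slope_def_field, div_neg_iff] at hy
  rcases hy with ⟨-, hneg⟩ | ⟨hpos, -⟩ <;> linarith

theorem hasDerivAt_classical_X_add_Y (a b C : ℝ) :
    HasDerivAt
      (fun δ => C * (Real.exp (-(a * δ)) - Real.exp (-(b * δ))) + Real.exp (-((a + b) * δ)))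
      (C * (b - a) - (a + b)) 0 := by
  have hexp : ∀ c : ℝ, HasDerivAt (fun δ => Real.exp (-(c * δ))) (-c) 0 := fun c => by
    simpa using ((hasDerivAt_id (0 : ℝ)).const_mul c).neg.exp
  exact (((hexp a).sub (hexp b)).const_mul C |>.add (hexp (a + b))).congr_deriv (by ring)

theorem eventually_classical_X_add_Y_lt_one {a b C : ℝ} (h : C * (b - a) < a + b) :
    ∀ᶠ δ in 𝓝[>] 0,
      C * (Real.exp (-(a * δ)) - Real.exp (-(b * δ))) + Real.exp (-((a + b) * δ)) < 1 := by
  simpa using eventually_nhdsGT_lt_of_hasDerivAt_neg (hasDerivAt_classical_X_add_Y a b C)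
    (by linarith)

theorem exists_lam_eq_ofReal {ω Cs Cp k : ℝ} (hω : 0 < ω) (hCs : 0 < Cs) (hCsCp : Cs < Cp)
    (hk : ω / Cs < k) :
    ∃ a b : ℝ, lam1 ω Cs k = a ∧ lam2 ω Cp k = b ∧ 0 < a ∧ a < b ∧ b < k := by
  have hk0 : 0 < k := (div_pos hω hCs).trans hk
  have hs : 0 < k ^ 2 - ω ^ 2 / Cs ^ 2 := by
    rw [← div_pow, sub_pos]
    exact pow_lt_pow_left₀ hk (div_pos hω hCs).le two_ne_zero
  have hsp : ω ^ 2 / Cp ^ 2 < ω ^ 2 / Cs ^ 2 :=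
    div_lt_div_of_pos_left (by positivity) (by positivity)
      (pow_lt_pow_left₀ hCsCp hCs.le two_ne_zero)
  have hp : 0 < ω ^ 2 / Cp ^ 2 := by have := hCs.trans hCsCp; positivity
  refine ⟨_, _, by rw [lam1, ofReal_cpow_one_half hs.le],
    by rw [lam2, ofReal_cpow_one_half (by linarith)], Real.sqrt_pos.mpr hs,
    Real.sqrt_lt_sqrt hs.le (by linarith), ?_⟩
  rw [Real.sqrt_lt' hk0]
  linarith

theorem contraction_coeff_mul_sub_lt {a b k : ℝ} (ha : 0 < a) (hak : a < k) (hb : 0 ≤ b)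
    (hbk : b < k) : (k ^ 2 + a * b) / (k ^ 2 - a * b) * (b - a) < a + b := by
  have hab : a * b < k ^ 2 := by nlinarith
  rw [div_mul_eq_mul_div, div_lt_iff₀ (by linarith)]
  -- the difference of the two sides is `2a(k² - b²)`
  nlinarith [mul_pos ha (show 0 < k ^ 2 - b ^ 2 by nlinarith)]

theorem Xcla_eq_ofReal {ω Cs Cp k a b : ℝ} (h₁ : lam1 ω Cs k = a) (h₂ : lam2 ω Cp k = b)
    (δ : ℝ) : Xcla ω Cs Cp k δ =
      ((k ^ 2 + a * b) / (k ^ 2 - a * b) * (Real.exp (-(a * δ)) - Real.exp (-(b * δ))) : ℝ) := by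
  simp only [Xcla, h₁, h₂]
  push_cast
  ring_nf

theorem Ycla_eq_ofReal {ω Cs Cp k a b : ℝ} (h₁ : lam1 ω Cs k = a) (h₂ : lam2 ω Cp k = b)
    (δ : ℝ) : Ycla ω Cs Cp k δ = (Real.exp (-((a + b) * δ)) : ℝ) := by
  simp only [Ycla, h₁, h₂]
  push_cast
  ring_nf

theorem classical_schwarz_high_frequency_contraction
    (ω Cs Cp k : ℝ)
    (hω : 0 < ω) (hCs : 0 < Cs) (hCsCp : Cs < Cp)
    (hk : ω / Cs < k) :
    ∃ δ₀ > 0, ∀ δ : ℝ, 0 < δ → δ < δ₀ →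
      ∀ z : ℂ, Qcla ω Cs Cp k δ z = 0 →
        ∃ x : ℝ, z = (x : ℂ) ∧ 0 < x ∧ x < 1 := by
  obtain ⟨a, b, h₁, h₂, ha, hab, hbk⟩ := exists_lam_eq_ofReal hω hCs hCsCp hk
  set C := (k ^ 2 + a * b) / (k ^ 2 - a * b)
  have hC : 0 < C := div_pos (by nlinarith) (by nlinarith)
  obtain ⟨δ₀, hδ₀, hsmall⟩ := (nhdsGT_basis 0).eventually_iff.mp <|
    eventually_classical_X_add_Y_lt_one
      (contraction_coeff_mul_sub_lt ha (hab.trans hbk) (ha.trans hab).le hbk)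
  refine ⟨δ₀, hδ₀, fun δ hδ hδδ₀ z hz => ?_⟩
  have hX : 0 < C * (Real.exp (-(a * δ)) - Real.exp (-(b * δ))) :=
    mul_pos hC (sub_pos.mpr (Real.exp_lt_exp.mpr (by nlinarith)))
  rw [Qcla, Xcla_eq_ofReal h₁ h₂, Ycla_eq_ofReal h₁ h₂] at hz
  have hXY := hsmall ⟨hδ, hδδ₀⟩
  rw [← abs_of_pos hX] at hXY
  exact quadratic_roots_mem_Ioo (Real.exp_pos _) hXY hz

end
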